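/- Soundness of Constraint C₁ (distinctness): suppose in the observation table, for rows ω₁, ω₂ and last resets (i,j) ∈ C(ω₁,ω₂), there is a suffix e ∈ E such that the aligned membership queries differ: MQ(ω₁·e₁) ≠ MQ(ω₂·e₂) where e₁, e₂ are obtained by the alignment construction with clock values ν_c(ω₁,i) and ν_c(ω₂,j). Then there is no complete DOTA A recognizing the target language with k_A(ω₁) = i, k_A(ω₂) = j, in which ω₁ and ω₂ reach the same location. -/

import Mathlib

/-- A run of a one-clock timed automaton with transition relation `Δ`
(`(q, σ, guard, reset, q') ∈ Δ`) from a state `(q, ν)` over a timed word,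
recording the trace of (reset bit, location, clock value) after each step. -/
inductive Run {Q A : Type} (Δ : Set (Q × A × Set ℝ × Bool × Q)) :
    (Q × ℝ) → List (A × ℝ) → List (Bool × Q × ℝ) → Prop
  | nil (s : Q × ℝ) : Run Δ s [] []
  | cons {q : Q} {v : ℝ} {a : A} {t : ℝ} {φ : Set ℝ} {b : Bool} {q' : Q}
      {ω : List (A × ℝ)} {tr : List (Bool × Q × ℝ)} :
      (q, a, φ, b, q') ∈ Δ → 0 ≤ t → v + t ∈ φ →
      Run Δ (q', if b then 0 else v + t) ω tr →
      Run Δ (q, v) ((a, t) :: ω) ((b, q', if b then 0 else v + t) :: tr)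

/-- The state reached at the end of a run with trace `tr` starting from `s`. -/
def endState {Q : Type} (s : Q × ℝ) (tr : List (Bool × Q × ℝ)) : Q × ℝ :=
  match tr.getLast? with
  | some (_, q, v) => (q, v)
  | none => s

/-- The sequence of reset bits of a run trace. -/
def resets {Q : Type} (tr : List (Bool × Q × ℝ)) : List Bool := tr.map (·.1)

/-- `k` is the last reset of a run with reset bits `bs` (1-based indexing):
`k = 0` if no step resets the clock, otherwise `k` is the largest index whose
step resets the clock. -/
def IsLastReset (bs : List Bool) (k : ℕ) : Prop :=
  k ≤ bs.length ∧ (k = 0 ∨ bs.getD (k - 1) false = true) ∧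
    ∀ j, k ≤ j → bs.getD j false = false

/-- `clockVal ω k` is the value of the clock after executing `ω` assuming the
last clock reset occurred at (1-based) position `k`: the sum of the delays
`t_{k+1} + ⋯ + t_n`. -/
def clockVal {A : Type} (ω : List (A × ℝ)) (k : ℕ) : ℝ :=
  ((ω.drop k).map (·.2)).sum

/-- The alignment construction: `align1 ν₁ ν₂ e` is the suffix attached to the
word with clock value `ν₁`, obtained from `e` by adding `ν₂ - ν₁` to the first
delay when `ν₁ < ν₂`, and leaving `e` unchanged otherwise. -/
noncomputable def align1 {A : Type} (ν₁ ν₂ : ℝ) : List (A × ℝ) → List (A × ℝ)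
  | [] => []
  | (a, t) :: rest =>
      if ν₁ < ν₂ then (a, t + (ν₂ - ν₁)) :: rest else (a, t) :: rest

/-- A timed word is accepted iff its run from the initial state ends in an
accepting location. -/
def Accepted {Q A : Type} (Δ : Set (Q × A × Set ℝ × Bool × Q)) (q0 : Q)
    (acc : Set Q) (ω : List (A × ℝ)) : Prop :=
  ∃ tr, Run Δ (q0, 0) ω tr ∧ (endState (q0, 0) tr).1 ∈ acc

section C1Aux

variable {Q A : Type} {Δ : Set (Q × A × Set ℝ × Bool × Q)}

private theorem endState_congr (s s' : Q × ℝ) {tr : List (Bool × Q × ℝ)} (h : tr ≠ []) :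
    endState s tr = endState s' tr := by
  rcases h' : tr.getLast? with _ | l
  · simp [List.getLast?_eq_none_iff] at h'
    exact absurd h' h
  · simp [endState, h']

private theorem endState_cons (s : Q × ℝ) (b : Bool) (q : Q) (v : ℝ)
    (tr : List (Bool × Q × ℝ)) :
    endState s ((b, q, v) :: tr) = endState (q, v) tr := by
  cases tr with
  | nil => rfl
  | cons x xs =>
    rcases h : (x :: xs).getLast? with _ | l
    · simp [List.getLast?_eq_none_iff] at h
    · simp [endState, List.getLast?_cons_cons, h]

private theorem endState_append (s : Q × ℝ) (t₁ t₂ : List (Bool × Q × ℝ)) :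
    endState s (t₁ ++ t₂) = endState (endState s t₁) t₂ := by
  cases t₂ with
  | nil => simp [endState]
  | cons x xs =>
    have hne : x :: xs ≠ [] := List.cons_ne_nil _ _
    rcases h : (x :: xs).getLast? with _ | l
    · simp [List.getLast?_eq_none_iff] at h
    · have : (t₁ ++ x :: xs).getLast? = some l := by
        rw [List.getLast?_append_of_ne_nil _ hne]  -- name guess
        exact h
      simp [endState, this, h]

private theorem run_cons_inv {q : Q} {v : ℝ} {a : A} {t : ℝ} {ω : List (A × ℝ)}
    {tr : List (Bool × Q × ℝ)} (h : Run Δ (q, v) ((a, t) :: ω) tr) :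
    ∃ φ b q' tr', tr = (b, q', if b then 0 else v + t) :: tr' ∧
      (q, a, φ, b, q') ∈ Δ ∧ 0 ≤ t ∧ v + t ∈ φ ∧
      Run Δ (q', if b then 0 else v + t) ω tr' := by
  cases h with
  | cons hmem ht hφ hr => exact ⟨_, _, _, _, rfl, hmem, ht, hφ, hr⟩

private theorem run_append : ∀ {s : Q × ℝ} {ω₁ : List (A × ℝ)} {tr₁ : List (Bool × Q × ℝ)},
    Run Δ s ω₁ tr₁ → ∀ {ω₂ tr₂}, Run Δ (endState s tr₁) ω₂ tr₂ →
    Run Δ s (ω₁ ++ ω₂) (tr₁ ++ tr₂) := by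
  intro s ω₁ tr₁ h1
  induction h1 with
  | nil s => intro ω₂ tr₂ h2; simpa [endState] using h2
  | cons hmem ht hφ hr ih =>
    intro ω₂ tr₂ h2
    rw [endState_cons] at h2
    exact Run.cons hmem ht hφ (ih h2)

private theorem run_unique
    (hcomplete : ∀ (q : Q) (a : A) (v : ℝ), 0 ≤ v →
      ∃! d : Set ℝ × Bool × Q, (q, a, d.1, d.2.1, d.2.2) ∈ Δ ∧ v ∈ d.1) :
    ∀ (ω : List (A × ℝ)) {q : Q} {v : ℝ} {tr tr' : List (Bool × Q × ℝ)},
      0 ≤ v → Run Δ (q, v) ω tr → Run Δ (q, v) ω tr' → tr = tr' := by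
  intro ω
  induction ω with
  | nil =>
    intro q v tr tr' _ h h'
    cases h; cases h'; rfl
  | cons p rest ih =>
    rintro q v tr tr' hv h h'
    obtain ⟨a, t⟩ := p
    obtain ⟨φ, b, q1, s, rfl, hmem, ht, hφ, hr⟩ := run_cons_inv h
    obtain ⟨φ', b', q1', s', rfl, hmem', ht', hφ', hr'⟩ := run_cons_inv h'
    obtain ⟨d, _, hduniq⟩ := hcomplete q a (v + t) (by linarith)
    have e1 := hduniq (φ, b, q1) ⟨hmem, hφ⟩
    have e2 := hduniq (φ', b', q1') ⟨hmem', hφ'⟩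
    have h3 : (φ, b, q1) = (φ', b', q1') := e1.trans e2.symm
    simp only [Prod.mk.injEq] at h3
    obtain ⟨hφe, hbe, hqe⟩ := h3
    subst hbe; subst hqe
    have hv' : (0:ℝ) ≤ if b then 0 else v + t := by
      cases b <;> simp <;> linarith
    rw [ih hv' hr hr']

private theorem run_exists
    (hcomplete : ∀ (q : Q) (a : A) (v : ℝ), 0 ≤ v →
      ∃! d : Set ℝ × Bool × Q, (q, a, d.1, d.2.1, d.2.2) ∈ Δ ∧ v ∈ d.1) :
    ∀ (ω : List (A × ℝ)) {q : Q} {v : ℝ}, 0 ≤ v → (∀ p ∈ ω, 0 ≤ p.2) →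
      ∃ tr, Run Δ (q, v) ω tr := by
  intro ω
  induction ω with
  | nil => exact fun _ _ => ⟨[], Run.nil _⟩
  | cons p rest ih =>
    rintro q v hv hpos
    obtain ⟨a, t⟩ := p
    have ht : 0 ≤ t := hpos (a, t) List.mem_cons_self
    obtain ⟨⟨φ, b, q'⟩, ⟨hmem, hφ⟩, -⟩ := hcomplete q a (v + t) (by linarith)
    have hv' : (0:ℝ) ≤ if b then 0 else v + t := by
      cases b <;> simp <;> linarith
    obtain ⟨tr', htr'⟩ := ih hv' (fun p hp => hpos p (List.mem_cons_of_mem _ hp))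
    exact ⟨_, Run.cons hmem ht hφ htr'⟩

private theorem end_clock_nonneg : ∀ {ω : List (A × ℝ)} {s : Q × ℝ} {tr},
    Run Δ s ω tr → 0 ≤ s.2 → 0 ≤ (endState s tr).2 := by
  intro ω s tr h
  induction h with
  | nil s => intro hv; simpa [endState] using hv
  | @cons q v a t φ b q' ω tr hmem ht hφ hr ih =>
    intro hv
    rw [endState_cons]
    exact ih (by cases b <;> simp <;> linarith)

private theorem end_clock_eq : ∀ {ω : List (A × ℝ)} {s : Q × ℝ} {tr}
    (_ : Run Δ s ω tr) {k} (_ : IsLastReset (resets tr) k),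
    (endState s tr).2 = (if k = 0 then s.2 else 0) + clockVal ω k := by
  intro ω s tr h
  induction h with
  | nil s =>
    intro k hk
    have : k = 0 := by
      have := hk.1
      simp [resets] at this
      omega
    subst this
    simp [endState, clockVal]
  | @cons q v a t φ b q' ω tr hmem ht hφ hr ih =>
    intro k hk
    have hres : resets ((b, q', if b then 0 else v + t) :: tr) = b :: resets tr := by
      simp [resets]
    rw [hres] at hk
    obtain ⟨hk1, hk2, hk3⟩ := hk
    rw [endState_cons]
    cases k with
    | zero =>
      have hb : b = false := by
        have := hk3 0 (Nat.zero_le _)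
        simpa using this
      subst hb
      have hlr : IsLastReset (resets tr) 0 := by
        refine ⟨Nat.zero_le _, Or.inl rfl, fun j _ => ?_⟩
        have := hk3 (j + 1) (Nat.zero_le _)
        simpa using this
      have := ih hlr
      simp only [if_pos rfl] at this ⊢
      simp only [Bool.false_eq_true, if_neg (by simp : ¬False)] at *
      rw [this]
      simp [clockVal]
      ring
    | succ m =>
      have hlr : IsLastReset (resets tr) m := by
        refine ⟨by simp at hk1; omega, ?_, fun j hj => ?_⟩
        · rcases Nat.eq_zero_or_pos m with hm | hm
          · exact Or.inl hm
          · right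
            rcases hk2 with h0 | h0
            · omega
            · have : (b :: resets tr).getD (m + 1 - 1) false = true := h0
              rw [Nat.add_sub_cancel] at this
              obtain ⟨m', rfl⟩ : ∃ m', m = m' + 1 := ⟨m - 1, by omega⟩
              simpa using this
        · have := hk3 (j + 1) (by omega)
          simpa using this
      have := ih hlr
      rcases Nat.eq_zero_or_pos m with hm | hm
      · subst hm
        have hb : b = true := by
          rcases hk2 with h0 | h0
          · omega
          · simpa using h0
        subst hb
        simp only [if_pos rfl] at this
        simp only [if_pos rfl]
        rw [this]
        simp [clockVal]
      · rw [this]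
        have hm0 : m ≠ 0 := by omega
        simp only [if_neg hm0, if_neg (Nat.succ_ne_zero m)]
        congr 1

private theorem run_shift {q : Q} {v₁ v₂ : ℝ} {a : A} {t₁ t₂ : ℝ}
    {rest : List (A × ℝ)} {tr : List (Bool × Q × ℝ)}
    (h : Run Δ (q, v₁) ((a, t₁) :: rest) tr) (ht₂ : 0 ≤ t₂)
    (he : v₁ + t₁ = v₂ + t₂) : Run Δ (q, v₂) ((a, t₂) :: rest) tr := by
  obtain ⟨φ, b, q', tr', rfl, hmem, ht, hφ, hr⟩ := run_cons_inv h
  have hφ2 : v₂ + t₂ ∈ φ := by rwa [← he]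
  have hr2 : Run Δ (q', if b then 0 else v₂ + t₂) rest tr' := by rwa [← he]
  have := Run.cons hmem ht₂ hφ2 hr2
  rwa [← he] at this

end C1Aux

/-- Soundness of Constraint C₁ (distinctness): if for rows `ω₁, ω₂` and last
resets `(i, j)` some suffix `e ∈ E` gives differing aligned membership
results, then in any complete DOTA recognizing the target language whose last
resets on `ω₁, ω₂` are `i, j`, the words `ω₁` and `ω₂` reach different
locations. -/
theorem constraint_C1_sound {Q A : Type}
    (Δ : Set (Q × A × Set ℝ × Bool × Q)) (q0 : Q) (acc : Set Q)
    (hcomplete : ∀ (q : Q) (a : A) (v : ℝ), 0 ≤ v →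
      ∃! d : Set ℝ × Bool × Q, (q, a, d.1, d.2.1, d.2.2) ∈ Δ ∧ v ∈ d.1)
    (ω₁ ω₂ : List (A × ℝ)) (i j : ℕ) (e : List (A × ℝ))
    (hepos : ∀ p ∈ e, 0 ≤ p.2)
    (hdiff : ¬ (Accepted Δ q0 acc (ω₁ ++ align1 (clockVal ω₁ i) (clockVal ω₂ j) e) ↔
        Accepted Δ q0 acc (ω₂ ++ align1 (clockVal ω₂ j) (clockVal ω₁ i) e)))
    (tr₁ tr₂ : List (Bool × Q × ℝ))
    (h1 : Run Δ (q0, 0) ω₁ tr₁) (h2 : Run Δ (q0, 0) ω₂ tr₂)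
    (hi : IsLastReset (resets tr₁) i) (hj : IsLastReset (resets tr₂) j) :
    (endState (q0, 0) tr₁).1 ≠ (endState (q0, 0) tr₂).1 := by
  intro hq
  set ν₁ := clockVal ω₁ i with hν₁def
  set ν₂ := clockVal ω₂ j with hν₂def
  have hc1 : (endState (q0, 0) tr₁).2 = ν₁ := by
    have := end_clock_eq h1 hi
    simpa using this
  have hc2 : (endState (q0, 0) tr₂).2 = ν₂ := by
    have := end_clock_eq h2 hj
    simpa using this
  have hE1 : endState (q0, 0) tr₁ = ((endState (q0, 0) tr₁).1, ν₁) :=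
    Prod.ext rfl hc1
  have hE2 : endState (q0, 0) tr₂ = ((endState (q0, 0) tr₁).1, ν₂) :=
    Prod.ext hq.symm hc2
  have hν₁0 : 0 ≤ ν₁ := by
    have := end_clock_nonneg h1 le_rfl
    rwa [hc1] at this
  have hν₂0 : 0 ≤ ν₂ := by
    have := end_clock_nonneg h2 le_rfl
    rwa [hc2] at this
  obtain ⟨tre, hre1, hre2⟩ :
      ∃ tre, Run Δ ((endState (q0, 0) tr₁).1, ν₁) (align1 ν₁ ν₂ e) tre ∧
        Run Δ ((endState (q0, 0) tr₁).1, ν₂) (align1 ν₂ ν₁ e) tre := by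
    cases e with
    | nil => exact ⟨[], Run.nil _, Run.nil _⟩
    | cons p rest =>
      obtain ⟨a, t⟩ := p
      have ht : 0 ≤ t := hepos (a, t) List.mem_cons_self
      rcases lt_trichotomy ν₁ ν₂ with hlt | heq | hgt
      · obtain ⟨tre, htre⟩ :=
          run_exists hcomplete ((a, t) :: rest) (q := (endState (q0, 0) tr₁).1) hν₂0 hepos
        refine ⟨tre, ?_, ?_⟩
        · have hal : align1 ν₁ ν₂ ((a, t) :: rest) = (a, t + (ν₂ - ν₁)) :: rest := by
            simp [align1, hlt]
          rw [hal]
          exact run_shift htre (by linarith) (by ring)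
        · have hal : align1 ν₂ ν₁ ((a, t) :: rest) = (a, t) :: rest := by
            simp [align1, not_lt.mpr hlt.le]
          rw [hal]
          exact htre
      · obtain ⟨tre, htre⟩ :=
          run_exists hcomplete ((a, t) :: rest) (q := (endState (q0, 0) tr₁).1) hν₁0 hepos
        have hal : align1 ν₁ ν₂ ((a, t) :: rest) = (a, t) :: rest := by
          simp [align1, heq]
        have hal' : align1 ν₂ ν₁ ((a, t) :: rest) = (a, t) :: rest := by
          simp [align1, heq]
        exact ⟨tre, by rw [hal]; exact htre, by rw [hal', ← heq]; exact htre⟩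
      · obtain ⟨tre, htre⟩ :=
          run_exists hcomplete ((a, t) :: rest) (q := (endState (q0, 0) tr₁).1) hν₁0 hepos
        refine ⟨tre, ?_, ?_⟩
        · have hal : align1 ν₁ ν₂ ((a, t) :: rest) = (a, t) :: rest := by
            simp [align1, not_lt.mpr hgt.le]
          rw [hal]
          exact htre
        · have hal : align1 ν₂ ν₁ ((a, t) :: rest) = (a, t + (ν₁ - ν₂)) :: rest := by
            simp [align1, hgt]
          rw [hal]
          exact run_shift htre (by linarith) (by ring)
  have full1 : Run Δ (q0, 0) (ω₁ ++ align1 ν₁ ν₂ e) (tr₁ ++ tre) :=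
    run_append h1 (by rw [hE1]; exact hre1)
  have full2 : Run Δ (q0, 0) (ω₂ ++ align1 ν₂ ν₁ e) (tr₂ ++ tre) :=
    run_append h2 (by rw [hE2]; exact hre2)
  have acc1 : Accepted Δ q0 acc (ω₁ ++ align1 ν₁ ν₂ e) ↔
      (endState ((endState (q0, 0) tr₁).1, ν₁) tre).1 ∈ acc := by
    constructor
    · rintro ⟨tr, htr, hacc⟩
      have heqtr := run_unique hcomplete _ le_rfl htr full1
      subst heqtr
      rwa [endState_append, hE1] at hacc
    · intro hacc
      exact ⟨_, full1, by rwa [endState_append, hE1]⟩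
  have acc2 : Accepted Δ q0 acc (ω₂ ++ align1 ν₂ ν₁ e) ↔
      (endState ((endState (q0, 0) tr₁).1, ν₂) tre).1 ∈ acc := by
    constructor
    · rintro ⟨tr, htr, hacc⟩
      have heqtr := run_unique hcomplete _ le_rfl htr full2
      subst heqtr
      rwa [endState_append, hE2] at hacc
    · intro hacc
      exact ⟨_, full2, by rwa [endState_append, hE2]⟩
  have hfin : (endState ((endState (q0, 0) tr₁).1, ν₁) tre).1 =
      (endState ((endState (q0, 0) tr₁).1, ν₂) tre).1 := by
    cases tre with
    | nil => rfl
    | cons x xs => rw [endState_congr _ ((endState (q0, 0) tr₁).1, ν₂) (List.cons_ne_nil _ _)]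
  exact hdiff (by rw [acc1, acc2, hfin])
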